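/- arXiv:1111.1580 — 4 statements merged into one kernel-verified Lean document; each statement's English description precedes it below -/
import Mathlib

section
/- For every m in W^{1,2}(0,1) and every ν > 0, one has ∫₀¹ e^{2m} dx ≤ ((1+ν)/4)(∫₀¹ e^m dx)² ∫₀¹ |m_x|² dx + (1 + 1/ν)(∫₀¹ e^m dx)². -/
/-!
Put `u = e^{m/2}`, so that `|u'| = u |m'| / 2`. By Cauchy–Schwarz,
`∫ |u'| ≤ (∫ e^m)^{1/2} (∫ m_x² / 4)^{1/2}`, and this bounds the oscillation of `u`. At a point `y`
where `e^{m(y)}` is at most its mean, Young's inequality `(a + b)² ≤ (1 + 1/ν) a² + (1 + ν) b²`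
gives `e^{m(x)} = u(x)² ≤ (1 + 1/ν) ∫ e^m + ((1 + ν)/4) ∫ e^m ∫ m_x²` for every `x`; multiplying
by `e^{m(x)}` and integrating yields the inequality.
-/

open MeasureTheory Set Real
open scoped ENNReal

theorem sq_integral_mul_le_integral_sq_mul_integral_sq {α : Type*} [MeasurableSpace α]
    {μ : Measure α} {f g : α → ℝ} (hf₀ : 0 ≤ᵐ[μ] f) (hg₀ : 0 ≤ᵐ[μ] g)
    (hf : MemLp f 2 μ) (hg : MemLp g 2 μ) :
    (∫ a, f a * g a ∂μ) ^ 2 ≤ (∫ a, f a ^ 2 ∂μ) * ∫ a, g a ^ 2 ∂μ := by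
  have hölder := integral_mul_le_Lp_mul_Lq_of_nonneg HolderConjugate.two_two hf₀ hg₀
    (by simpa using hf) (by simpa using hg)
  simp only [rpow_two, ← sqrt_eq_rpow] at hölder
  have h₀ : 0 ≤ ∫ a, f a * g a ∂μ :=
    integral_nonneg_of_ae (by filter_upwards [hf₀, hg₀] with a ha hb using mul_nonneg ha hb)
  calc (∫ a, f a * g a ∂μ) ^ 2
      ≤ (√(∫ a, f a ^ 2 ∂μ) * √(∫ a, g a ^ 2 ∂μ)) ^ 2 := pow_le_pow_left₀ h₀ hölder 2
    _ = (∫ a, f a ^ 2 ∂μ) * ∫ a, g a ^ 2 ∂μ := by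
      rw [mul_pow, sq_sqrt (integral_nonneg fun _ => sq_nonneg _),
        sq_sqrt (integral_nonneg fun _ => sq_nonneg _)]

theorem add_sq_le_of_pos {a b ν : ℝ} (hν : 0 < ν) :
    (a + b) ^ 2 ≤ (1 + 1 / ν) * a ^ 2 + (1 + ν) * b ^ 2 := by
  have h : (1 + 1 / ν) * a ^ 2 + (1 + ν) * b ^ 2 - (a + b) ^ 2 = (a - ν * b) ^ 2 / ν := by
    field_simp
    ring
  linarith [div_nonneg (sq_nonneg (a - ν * b)) hν.le]

theorem integrableOn_of_integrableOn_sq {α : Type*} [MeasurableSpace α] {μ : Measure α}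
    {f : α → ℝ} {s : Set α} (hs : μ s ≠ ∞) (hf : AEStronglyMeasurable f (μ.restrict s))
    (hf₂ : IntegrableOn (fun x => f x ^ 2) s μ) : IntegrableOn f s μ :=
  have : IsFiniteMeasure (μ.restrict s) := isFiniteMeasure_restrict.2 hs
  ((memLp_two_iff_integrable_sq hf).2 hf₂).integrable one_le_two

section

variable {f f' m m' : ℝ → ℝ} {s : Set ℝ}

theorem aestronglyMeasurable_of_hasDerivAt (hs : MeasurableSet s)
    (hf : ∀ x ∈ s, HasDerivAt f (f' x) x) : AEStronglyMeasurable f' (volume.restrict s) :=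
  (measurable_deriv f).aestronglyMeasurable.congr <|
    (ae_restrict_iff' hs).2 (.of_forall fun x hx => (hf x hx).deriv)

theorem le_add_setIntegral_abs_of_hasDerivAt {x y : ℝ} (hs : s.OrdConnected)
    (hf : ∀ t ∈ s, HasDerivAt f (f' t) t) (hf' : IntegrableOn f' s) (hx : x ∈ s) (hy : y ∈ s) :
    f x ≤ f y + ∫ t in s, |f' t| := by
  have hsub : uIcc y x ⊆ s := hs.uIcc_subset hy hx
  have hftc : ∫ t in y..x, f' t = f x - f y :=
    intervalIntegral.integral_eq_sub_of_hasDerivAt (fun t ht => hf t (hsub ht))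
      (hf'.mono_set hsub).intervalIntegrable
  have hle : |∫ t in y..x, f' t| ≤ ∫ t in s, |f' t| :=
    calc |∫ t in y..x, f' t| ≤ ∫ t in uIoc y x, |f' t| := by
          simpa only [norm_eq_abs] using
            intervalIntegral.norm_integral_le_integral_norm_uIoc (f := f') (μ := volume)
      _ ≤ ∫ t in s, |f' t| :=
          setIntegral_mono_set hf'.abs (.of_forall fun _ => abs_nonneg _)
            (.of_forall (uIoc_subset_uIcc.trans hsub))
  linarith [(abs_le.1 (hftc ▸ hle)).2]

theorem integrableOn_exp_mul_of_le {g : ℝ → ℝ} {M : ℝ} (hs : MeasurableSet s)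
    (hf : ContinuousOn f s) (hM : ∀ x ∈ s, f x ≤ M) (hg : IntegrableOn g s) :
    IntegrableOn (fun x => exp (f x) * g x) s :=
  hg.bdd_mul ((continuous_exp.comp_continuousOn hf).aestronglyMeasurable hs)
    ((ae_restrict_iff' hs).2 (.of_forall fun x hx => by
      simpa only [norm_eq_abs, abs_exp] using exp_le_exp.2 (hM x hx)))

theorem sq_exp_half (x : ℝ) : exp (x / 2) ^ 2 = exp x := by
  rw [exp_half, sq_sqrt (exp_pos x).le]

theorem exp_le_exp_add_integral_mul_integral_sq {x y ν : ℝ} (hs : s.OrdConnected)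
    (hderiv : ∀ t ∈ s, HasDerivAt m (m' t) t) (hm' : IntegrableOn (fun t => m' t ^ 2) s)
    (hexp : IntegrableOn (fun t => exp (m t)) s)
    (hu' : IntegrableOn (fun t => exp (m t / 2) * (m' t / 2)) s) (hν : 0 < ν)
    (hx : x ∈ s) (hy : y ∈ s) :
    exp (m x) ≤
      (1 + 1 / ν) * exp (m y) + (1 + ν) / 4 * (∫ t in s, exp (m t)) * ∫ t in s, m' t ^ 2 := by
  set S := ∫ t in s, exp (m t / 2) * |m' t / 2|
  have hosc : exp (m x / 2) ≤ exp (m y / 2) + S := by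
    simpa only [abs_mul, abs_exp] using le_add_setIntegral_abs_of_hasDerivAt hs
      (fun t ht => ((hderiv t ht).div_const 2).exp) hu' hx hy
  have hCS : S ^ 2 ≤ (∫ t in s, exp (m t)) * (∫ t in s, m' t ^ 2) / 4 := by
    have hg : AEStronglyMeasurable (fun t => |m' t / 2|) (volume.restrict s) :=
      continuous_abs.comp_aestronglyMeasurable
        ((aestronglyMeasurable_of_hasDerivAt hs.measurableSet hderiv).aemeasurable.div_const
          2).aestronglyMeasurable
    have hu : AEStronglyMeasurable (fun t => exp (m t / 2)) (volume.restrict s) :=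
      (continuous_exp.comp_continuousOn fun t ht =>
        ((hderiv t ht).continuousAt.div_const 2).continuousWithinAt).aestronglyMeasurable
        hs.measurableSet
    have hsq := sq_integral_mul_le_integral_sq_mul_integral_sq
      (.of_forall fun t => (exp_pos (m t / 2)).le) (.of_forall fun t => abs_nonneg (m' t / 2))
      ((memLp_two_iff_integrable_sq hu).2 (by simpa only [sq_exp_half, IntegrableOn] using hexp))
      ((memLp_two_iff_integrable_sq hg).2
        (by simpa only [sq_abs, div_pow] using hm'.div_const (2 ^ 2)))
    simp only [sq_exp_half, sq_abs, div_pow, integral_div] at hsq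
    linarith
  calc exp (m x) = exp (m x / 2) ^ 2 := (sq_exp_half _).symm
    _ ≤ (exp (m y / 2) + S) ^ 2 := pow_le_pow_left₀ (exp_pos _).le hosc 2
    _ ≤ (1 + 1 / ν) * exp (m y / 2) ^ 2 + (1 + ν) * S ^ 2 := add_sq_le_of_pos hν
    _ ≤ _ := by
      rw [sq_exp_half]
      nlinarith

theorem setIntegral_exp_two_mul_le {ν : ℝ} (hs : s.OrdConnected) (hs₀ : volume s ≠ 0)
    (hs_fin : volume s ≠ ∞) (hderiv : ∀ x ∈ s, HasDerivAt m (m' x) x)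
    (hm' : IntegrableOn (fun x => m' x ^ 2) s) (hν : 0 < ν) :
    ∫ x in s, exp (2 * m x) ≤
      (1 + ν) / 4 * (∫ x in s, exp (m x)) ^ 2 * (∫ x in s, m' x ^ 2) +
      (1 + 1 / ν) * (∫ x in s, exp (m x)) ^ 2 / volume.real s := by
  set E := ∫ x in s, exp (m x)
  set D := ∫ x in s, m' x ^ 2
  have hsm : MeasurableSet s := hs.measurableSet
  have hcont : ContinuousOn m s := fun x hx => (hderiv x hx).continuousAt.continuousWithinAt
  have hm'_int : IntegrableOn m' s :=
    integrableOn_of_integrableOn_sq hs_fin (aestronglyMeasurable_of_hasDerivAt hsm hderiv) hm'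
  obtain ⟨y₀, hy₀⟩ := nonempty_of_measure_ne_zero hs₀
  have hM : ∀ x ∈ s, m x ≤ m y₀ + ∫ t in s, |m' t| := fun x hx =>
    le_add_setIntegral_abs_of_hasDerivAt hs hderiv hm'_int hx hy₀
  have hexp : IntegrableOn (fun x => exp (m x)) s := by
    simpa only [mul_one] using integrableOn_exp_mul_of_le hsm hcont hM
      (integrableOn_const (C := (1 : ℝ)) hs_fin)
  have hu' : IntegrableOn (fun x => exp (m x / 2) * (m' x / 2)) s :=
    integrableOn_exp_mul_of_le hsm (hcont.div_const 2)
      (fun x hx => div_le_div_of_nonneg_right (hM x hx) zero_le_two) (hm'_int.div_const 2)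
  obtain ⟨y, hy, hyE⟩ := exists_le_setAverage hs₀ hs_fin hexp
  rw [setAverage_eq, smul_eq_mul, ← div_eq_inv_mul] at hyE
  set C := (1 + 1 / ν) * exp (m y) + (1 + ν) / 4 * E * D
  have hpt : ∀ x ∈ s, exp (2 * m x) ≤ C * exp (m x) := fun x hx => by
    rw [two_mul, exp_add]
    exact mul_le_mul_of_nonneg_right
      (exp_le_exp_add_integral_mul_integral_sq hs hderiv hm' hexp hu' hν hx hy) (exp_pos _).le
  calc ∫ x in s, exp (2 * m x) ≤ ∫ x in s, C * exp (m x) :=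
        integral_mono_of_nonneg (.of_forall fun _ => (exp_pos _).le) (hexp.const_mul C)
          ((ae_restrict_iff' hsm).2 (.of_forall hpt))
    _ = C * E := integral_const_mul C _
    _ = (1 + ν) / 4 * E ^ 2 * D + (1 + 1 / ν) * (exp (m y) * E) := by ring
    _ ≤ (1 + ν) / 4 * E ^ 2 * D + (1 + 1 / ν) * (E / volume.real s * E) := by
      gcongr
    _ = _ := by ring

end

theorem exp_moser_trudinger_type_general (m m' : ℝ → ℝ)
    (hderiv : ∀ x ∈ Ioo (0:ℝ) 1, HasDerivAt m (m' x) x)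
    (hm' : IntegrableOn (fun x => (m' x) ^ 2) (Ioo 0 1))
    (ν : ℝ) (hν : 0 < ν) :
    (∫ x in (0:ℝ)..1, Real.exp (2 * m x)) ≤
      (1 + ν) / 4 * (∫ x in (0:ℝ)..1, Real.exp (m x)) ^ 2 *
        (∫ x in (0:ℝ)..1, (m' x) ^ 2) +
      (1 + 1 / ν) * (∫ x in (0:ℝ)..1, Real.exp (m x)) ^ 2 := by
  have h := setIntegral_exp_two_mul_le ordConnected_Ioo (by simp) (by simp) hderiv hm' hν
  have hvol : volume.real (Ioo (0:ℝ) 1) = 1 := by simp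
  simpa only [intervalIntegral.integral_of_le zero_le_one, integral_Ioc_eq_integral_Ioo, hvol,
    div_one] using h

/-- For every `m ∈ W^{1,2}(0,1)` and every `ν > 0`,
`∫₀¹ e^{2m} ≤ ((1+ν)/4) (∫₀¹ e^m)² ∫₀¹ |m_x|² + (1 + 1/ν) (∫₀¹ e^m)²`. -/
theorem exp_moser_trudinger_type (m m' : ℝ → ℝ)
    (hderiv : ∀ x ∈ Ioo (0:ℝ) 1, HasDerivAt m (m' x) x)
    (hm : IntegrableOn m (Ioo 0 1))
    (hm' : IntegrableOn (fun x => (m' x) ^ 2) (Ioo 0 1))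
    (ν : ℝ) (hν : 0 < ν) :
    (∫ x in (0:ℝ)..1, Real.exp (2 * m x)) ≤
      (1 + ν) / 4 * (∫ x in (0:ℝ)..1, Real.exp (m x)) ^ 2 *
        (∫ x in (0:ℝ)..1, (m' x) ^ 2) +
      (1 + 1 / ν) * (∫ x in (0:ℝ)..1, Real.exp (m x)) ^ 2 :=
  exp_moser_trudinger_type_general m m' hderiv hm' ν hν
end

section
/- The nonlinear functional inequality ∫₀¹ e^{2m} dx < δ M² ∫₀¹ |m_x|² dx + h_δ(∫₀¹ e^m dx) fails for all sufficiently small δ > 0: for any δ ≤ 1/24 and any continuous function h_δ : [0,∞) → ℝ, there exists m ∈ W^{1,2}(0,1) with ∫₀¹ e^m dx = M for which the inequality does not hold. -/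
open MeasureTheory Set Real Filter Topology

/-! For `ε > 0` take `e^{m_ε} = ε(1+ε)M/(x+ε)²`. Then `∫₀¹ e^{m_ε} = M`, while
`∫₀¹ e^{2m_ε} = M²/(3ε(1+ε)) + M²` and `∫₀¹ |m_ε'|² = 4/(ε(1+ε))`. For `δ ≤ 1/24` the term
`δ M² ∫₀¹ |m_ε'|²` absorbs at most half of `M²/(3ε(1+ε))`, and the remaining `M²/(6ε(1+ε))`
exceeds `h(M)` once `ε` is small. -/

theorem integral_add_const_zpow {c : ℝ} (hc : 0 < c) {n : ℤ} (hn : n ≠ -1) :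
    ∫ x in (0:ℝ)..1, (x + c) ^ n = ((1 + c) ^ (n + 1) - c ^ (n + 1)) / (n + 1) := by
  have hc0 : (0:ℝ) ∉ uIcc c (1 + c) := by
    rw [uIcc_of_le (by linarith)]
    exact fun hmem => absurd hmem.1 (by linarith)
  rw [intervalIntegral.integral_comp_add_right (fun x => x ^ n), zero_add,
    integral_zpow (Or.inr ⟨hn, hc0⟩)]

noncomputable def bubble (M ε x : ℝ) : ℝ := log (ε * (1 + ε) * M) - 2 * log (x + ε)

noncomputable def bubbleDeriv (ε x : ℝ) : ℝ := -2 / (x + ε)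

section

variable {M ε : ℝ}

theorem hasDerivAt_bubble {x : ℝ} (hx : 0 < x + ε) :
    HasDerivAt (bubble M ε) (bubbleDeriv ε x) x := by
  have hlog := ((hasDerivAt_id x).add_const ε).log hx.ne'
  refine ((hlog.const_mul 2).const_sub (log (ε * (1 + ε) * M))).congr_deriv ?_
  rw [bubbleDeriv, id]
  ring

theorem exp_bubble (hM : 0 < M) (hε : 0 < ε) {x : ℝ} (hx : 0 < x + ε) :
    exp (bubble M ε x) = ε * (1 + ε) * M * (x + ε) ^ (-2 : ℤ) := by
  rw [bubble, exp_sub, exp_log (by positivity), ← log_rpow hx, exp_log (by positivity),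
    div_eq_mul_inv, ← Real.rpow_neg hx.le]
  norm_cast

theorem integral_exp_bubble (hM : 0 < M) (hε : 0 < ε) :
    ∫ x in (0:ℝ)..1, exp (bubble M ε x) = M := by
  have hexp : EqOn (fun x => exp (bubble M ε x))
      (fun x => ε * (1 + ε) * M * (x + ε) ^ (-2 : ℤ)) (uIcc 0 1) := fun x hx =>
    exp_bubble hM hε (by rw [uIcc_of_le zero_le_one] at hx; linarith [hx.1])
  rw [intervalIntegral.integral_congr hexp, intervalIntegral.integral_const_mul,
    integral_add_const_zpow hε (by norm_num)]
  norm_num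
  field_simp
  ring

theorem exp_two_mul_bubble (hM : 0 < M) (hε : 0 < ε) {x : ℝ} (hx : 0 < x + ε) :
    exp (2 * bubble M ε x) = (ε * (1 + ε) * M) ^ 2 * (x + ε) ^ (-4 : ℤ) := by
  rw [two_mul, exp_add, exp_bubble hM hε hx, show (-4 : ℤ) = -2 + -2 by norm_num,
    zpow_add₀ hx.ne']
  ring

theorem integral_exp_two_mul_bubble (hM : 0 < M) (hε : 0 < ε) :
    ∫ x in (0:ℝ)..1, exp (2 * bubble M ε x) = M ^ 2 / (3 * (ε * (1 + ε))) + M ^ 2 := by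
  have hexp : EqOn (fun x => exp (2 * bubble M ε x))
      (fun x => (ε * (1 + ε) * M) ^ 2 * (x + ε) ^ (-4 : ℤ)) (uIcc 0 1) := fun x hx =>
    exp_two_mul_bubble hM hε (by rw [uIcc_of_le zero_le_one] at hx; linarith [hx.1])
  rw [intervalIntegral.integral_congr hexp, intervalIntegral.integral_const_mul,
    integral_add_const_zpow hε (by norm_num)]
  norm_num
  field_simp
  ring

theorem integral_bubbleDeriv_sq (hε : 0 < ε) :
    ∫ x in (0:ℝ)..1, bubbleDeriv ε x ^ 2 = 4 / (ε * (1 + ε)) := by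
  have hsq : EqOn (fun x => bubbleDeriv ε x ^ 2) (fun x => 4 * (x + ε) ^ (-2 : ℤ)) (uIcc 0 1) :=
    fun x _ => by simp only [bubbleDeriv, zpow_neg, div_pow]; norm_num [div_eq_mul_inv]
  rw [intervalIntegral.integral_congr hsq, intervalIntegral.integral_const_mul,
    integral_add_const_zpow hε (by norm_num)]
  norm_num
  field_simp
  ring

theorem integrableOn_bubbleDeriv_sq (hε : 0 < ε) :
    IntegrableOn (fun x => bubbleDeriv ε x ^ 2) (Ioo 0 1) := by
  have hcont : ContinuousOn (fun x => bubbleDeriv ε x ^ 2) (Icc 0 1) :=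
    (continuousOn_const.div (by fun_prop) fun x hx => by linarith [hx.1]).pow 2
  exact hcont.integrableOn_Icc.mono_set Ioo_subset_Icc_self

theorem add_le_integral_exp_two_mul_bubble (hM : 0 < M) (hε : 0 < ε) {δ : ℝ}
    (hδ : δ ≤ 1 / 24) :
    δ * M ^ 2 * (∫ x in (0:ℝ)..1, bubbleDeriv ε x ^ 2) + M ^ 2 / (6 * (ε * (1 + ε))) ≤
      ∫ x in (0:ℝ)..1, exp (2 * bubble M ε x) := by
  rw [integral_bubbleDeriv_sq hε, integral_exp_two_mul_bubble hM hε]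
  have hd : 0 < ε * (1 + ε) := by positivity
  calc δ * M ^ 2 * (4 / (ε * (1 + ε))) + M ^ 2 / (6 * (ε * (1 + ε)))
      ≤ 1 / 24 * M ^ 2 * (4 / (ε * (1 + ε))) + M ^ 2 / (6 * (ε * (1 + ε))) := by gcongr
    _ = M ^ 2 / (3 * (ε * (1 + ε))) := by field_simp; ring
    _ ≤ M ^ 2 / (3 * (ε * (1 + ε))) + M ^ 2 := by linarith [sq_nonneg M]

end

theorem tendsto_div_mul_one_add_nhdsGT_zero {c : ℝ} (hc : 0 < c) :
    Tendsto (fun ε => c / (ε * (1 + ε))) (𝓝[>] 0) atTop := by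
  have hprod : Tendsto (fun ε : ℝ => ε * (1 + ε)) (𝓝[>] 0) (𝓝[>] 0) := by
    refine tendsto_nhdsWithin_iff.2 ⟨?_, ?_⟩
    · exact ((continuous_id.mul (continuous_const.add continuous_id)).tendsto' 0 0
        (by simp)).mono_left nhdsWithin_le_nhds
    · filter_upwards [self_mem_nhdsWithin] with ε (hε : 0 < ε)
      exact mul_pos hε (by linarith)
  simpa only [div_eq_mul_inv, Function.comp_def] using
    (tendsto_inv_nhdsGT_zero.comp hprod).const_mul_atTop hc

theorem functional_inequality_fails_general (M δ : ℝ) (hM : 0 < M)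
    (hδ' : δ ≤ 1 / 24) (h : ℝ → ℝ) :
    ∃ m m' : ℝ → ℝ,
      (∀ x ∈ Ioo (0:ℝ) 1, HasDerivAt m (m' x) x) ∧
      IntegrableOn (fun x => (m' x) ^ 2) (Ioo 0 1) ∧
      (∫ x in (0:ℝ)..1, Real.exp (m x)) = M ∧
      ¬ ((∫ x in (0:ℝ)..1, Real.exp (2 * m x)) <
          δ * M ^ 2 * (∫ x in (0:ℝ)..1, (m' x) ^ 2) +
            h (∫ x in (0:ℝ)..1, Real.exp (m x))) := by
  obtain ⟨ε, hgap, hε : 0 < ε⟩ :=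
    (((tendsto_div_mul_one_add_nhdsGT_zero (by positivity : 0 < M ^ 2 / 6)).eventually_ge_atTop
      (h M)).and self_mem_nhdsWithin).exists
  refine ⟨bubble M ε, bubbleDeriv ε, fun x hx => hasDerivAt_bubble (by linarith [hx.1]),
    integrableOn_bubbleDeriv_sq hε, integral_exp_bubble hM hε, ?_⟩
  rw [integral_exp_bubble hM hε, not_lt]
  have hbound := add_le_integral_exp_two_mul_bubble hM hε hδ'
  rw [div_div] at hgap
  linarith

/-- For any `M > 0`, any `0 < δ ≤ 1/24` and any continuous `h : [0,∞) → ℝ`, the inequality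
`∫₀¹ e^{2m} < δ M² ∫₀¹ |m_x|² + h(∫₀¹ e^m)` fails for some `m ∈ W^{1,2}(0,1)` with
`∫₀¹ e^m = M`. -/
theorem functional_inequality_fails (M δ : ℝ) (hM : 0 < M) (hδ : 0 < δ)
    (hδ' : δ ≤ 1 / 24) (h : ℝ → ℝ) (hh : ContinuousOn h (Ici 0)) :
    ∃ m m' : ℝ → ℝ,
      (∀ x ∈ Ioo (0:ℝ) 1, HasDerivAt m (m' x) x) ∧
      IntegrableOn (fun x => (m' x) ^ 2) (Ioo 0 1) ∧
      (∫ x in (0:ℝ)..1, Real.exp (m x)) = M ∧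
      ¬ ((∫ x in (0:ℝ)..1, Real.exp (2 * m x)) <
          δ * M ^ 2 * (∫ x in (0:ℝ)..1, (m' x) ^ 2) +
            h (∫ x in (0:ℝ)..1, Real.exp (m x))) :=
  functional_inequality_fails_general M δ hM hδ' h
end

section
/- Let a ∈ C¹(0,∞) ∩ L¹(0,∞) with a ≥ 0, and suppose sup_{r ∈ (0,1)} r ∫_r^∞ a(s) ds < ∞. Then there exists a concave function B ∈ C[0,∞) such that B(r) ≥ r ∫_r^∞ a(s) ds for all r ≥ 0 and lim_{r→∞} B(r)/r = 0. -/
/-!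
The tail `T r = ∫_r^∞ a` is nonincreasing and tends to `0`, so its primitive `B r = ∫_0^r T` is
concave, dominates `r * T r` (since `T ≥ T r` on `[0, r]`), and `B r / r`, an average of `T` over
`[0, r]`, tends to `0`. Extending `a` by zero to `(-∞, 0]` makes `T` antitone on the whole line.
-/

open MeasureTheory Set Filter Topology

section Primitive

variable {g : ℝ → ℝ}

theorem Antitone.mul_le_intervalIntegral (hg : Antitone g) {x y : ℝ} (hxy : x ≤ y) :
    (y - x) * g y ≤ ∫ s in x..y, g s := by
  simpa [mul_comm] using intervalIntegral.integral_mono_on hxy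
    (intervalIntegrable_const (μ := volume)) hg.intervalIntegrable fun t ht => hg ht.2

theorem Antitone.intervalIntegral_le_mul (hg : Antitone g) {x y : ℝ} (hxy : x ≤ y) :
    ∫ s in x..y, g s ≤ (y - x) * g x := by
  simpa [mul_comm] using intervalIntegral.integral_mono_on hxy hg.intervalIntegrable
    (intervalIntegrable_const (μ := volume)) fun t ht => hg ht.1

theorem Antitone.concaveOn_primitive (hg : Antitone g) (c : ℝ) :
    ConcaveOn ℝ univ fun r => ∫ s in c..r, g s := by
  refine concaveOn_of_slope_anti_adjacent convex_univ fun {x y z} _ _ hxy hyz => ?_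
  simp only [intervalIntegral.integral_interval_sub_left hg.intervalIntegrable
    hg.intervalIntegrable]
  calc (∫ s in y..z, g s) / (z - y)
      ≤ g y := (div_le_iff₀ (sub_pos.2 hyz)).2 (by linarith [hg.intervalIntegral_le_mul hyz.le])
    _ ≤ (∫ s in x..y, g s) / (y - x) :=
      (le_div_iff₀ (sub_pos.2 hxy)).2 (by linarith [hg.mul_le_intervalIntegral hxy.le])

theorem Antitone.tendsto_primitive_div_atTop (hg : Antitone g) (hlim : Tendsto g atTop (𝓝 0)) :
    Tendsto (fun r => (∫ s in 0..r, g s) / r) atTop (𝓝 0) := by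
  have hg0 : ∀ x, 0 ≤ g x := fun x => hg.le_of_tendsto hlim x
  refine tendsto_order.2 ⟨fun ε hε => ?_, fun ε hε => ?_⟩
  · filter_upwards [eventually_gt_atTop 0] with r hr
    exact hε.trans_le (div_nonneg (intervalIntegral.integral_nonneg hr.le fun t _ => hg0 t) hr.le)
  · obtain ⟨R, hR0, hgR⟩ : ∃ R, 0 ≤ R ∧ g R < ε / 2 :=
      ((eventually_ge_atTop 0).and (hlim.eventually (gt_mem_nhds (half_pos hε)))).exists
    have hhead : Tendsto (fun r => (∫ s in 0..R, g s) / r) atTop (𝓝 0) :=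
      tendsto_const_nhds.div_atTop tendsto_id
    filter_upwards [eventually_gt_atTop R, hhead.eventually (gt_mem_nhds (half_pos hε))]
      with r hRr hsmall
    have hr : 0 < r := hR0.trans_lt hRr
    rw [div_lt_iff₀ hr] at hsmall ⊢
    rw [← intervalIntegral.integral_add_adjacent_intervals hg.intervalIntegrable
      hg.intervalIntegrable]
    nlinarith [hg.intervalIntegral_le_mul hRr.le, hg0 R]

end Primitive

section Tail

variable {f : ℝ → ℝ}

theorem antitone_setIntegral_Ioi (hf : Integrable f) (hf0 : 0 ≤ f) :
    Antitone fun r => ∫ s in Ioi r, f s := fun _ _ h =>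
  setIntegral_mono_set hf.integrableOn (Eventually.of_forall hf0) (Ioi_subset_Ioi h).eventuallyLE

theorem tendsto_setIntegral_Ioi_atTop {c : ℝ} (hf : IntegrableOn f (Ioi c)) :
    Tendsto (fun r => ∫ s in Ioi r, f s) atTop (𝓝 0) := by
  have hempty : ⋂ r : ℝ, Ioi r = ∅ := iInter_eq_empty_iff.2 fun x => ⟨x, lt_irrefl x⟩
  simpa [hempty] using tendsto_setIntegral_of_antitone (fun r => measurableSet_Ioi)
    (fun _ _ h => Ioi_subset_Ioi h) ⟨c, hf⟩

end Tail

theorem concave_sublinear_majorant_general (a : ℝ → ℝ)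
    (hint : IntegrableOn a (Ioi 0))
    (hpos : ∀ r ∈ Ioi (0:ℝ), 0 ≤ a r) :
    ∃ B : ℝ → ℝ,
      ContinuousOn B (Ici 0) ∧
      ConcaveOn ℝ (Ici 0) B ∧
      (∀ r : ℝ, 0 ≤ r → r * ∫ s in Ioi r, a s ≤ B r) ∧
      Tendsto (fun r => B r / r) atTop (nhds 0) := by
  have hb : Integrable ((Ioi 0).indicator a) := hint.integrable_indicator measurableSet_Ioi
  have hg : Antitone fun r => ∫ s in Ioi r, (Ioi 0).indicator a s :=
    antitone_setIntegral_Ioi hb (indicator_nonneg hpos)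
  have htail : ∀ r : ℝ, 0 ≤ r → ∫ s in Ioi r, (Ioi 0).indicator a s = ∫ s in Ioi r, a s :=
    fun r hr => by rw [setIntegral_indicator measurableSet_Ioi, Ioi_inter_Ioi, max_eq_left hr]
  refine ⟨fun r => ∫ t in 0..r, ∫ s in Ioi t, (Ioi 0).indicator a s,
    (intervalIntegral.continuous_primitive (fun _ _ => hg.intervalIntegrable) 0).continuousOn,
    (hg.concaveOn_primitive 0).subset (subset_univ _) (convex_Ici 0), fun r hr => ?_,
    hg.tendsto_primitive_div_atTop (tendsto_setIntegral_Ioi_atTop (c := 0) hb.integrableOn)⟩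
  simpa [htail r hr] using hg.mul_le_intervalIntegral hr

/-- If `a ∈ C¹(0,∞) ∩ L¹(0,∞)` is nonnegative and `r ↦ r ∫_r^∞ a` is bounded on `(0,1)`,
then there exists a concave continuous `B : [0,∞) → ℝ` with `B(r) ≥ r ∫_r^∞ a(s) ds`
for all `r ≥ 0` and `B(r)/r → 0` as `r → ∞`. -/
theorem concave_sublinear_majorant (a : ℝ → ℝ)
    (hC1 : ContDiffOn ℝ 1 a (Ioi 0))
    (hint : IntegrableOn a (Ioi 0))
    (hpos : ∀ r ∈ Ioi (0:ℝ), 0 ≤ a r)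
    (hbdd : ∃ K : ℝ, ∀ r ∈ Ioo (0:ℝ) 1, r * ∫ s in Ioi r, a s ≤ K) :
    ∃ B : ℝ → ℝ,
      ContinuousOn B (Ici 0) ∧
      ConcaveOn ℝ (Ici 0) B ∧
      (∀ r : ℝ, 0 ≤ r → r * ∫ s in Ioi r, a s ≤ B r) ∧
      Tendsto (fun r => B r / r) atTop (nhds 0) :=
  concave_sublinear_majorant_general a hint hpos
end

section
/- Let B : [0,∞) → [0,∞) be concave with B(0) ≥ 0, let u : (0,1) → [0,∞) be integrable with ∫₀¹ u = M, let U(x) = ∫₀^x u, and let L = (1/q)∫₀¹ U^q for some q > 2. Then ∫₀¹ U^{q−2} B(u) dx ≤ (qL)^{(q−2)/q} B(M)^{2/q} B(M^{q+1}/((q+1)qL))^{(q−2)/q}, where the last argument uses ∫₀¹ u U^q dx = U(1)^{q+1}/(q+1) = M^{q+1}/(q+1). -/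
/-!
Hölder's inequality with exponents `q / (q - 2)` and `q / 2` bounds `∫ U^(q-2) B(u)` by
`(∫ U^q B(u))^((q-2)/q) (∫ B(u))^(2/q)`. Both factors are then estimated by Jensen's inequality
for the concave `B`: against `dx` the mean of `u` is `M`, and against `U^q dx / (qL)` it is
`∫ u U^q / (qL) = M^(q+1) / ((q+1) q L)`. The identity `∫ u U^q = M^(q+1) / (q+1)` is the
fundamental theorem of calculus for the absolutely continuous function `U^(q+1)`.
-/

open MeasureTheory Set Filter

theorem LipschitzOnWith.comp_absolutelyContinuousOnInterval {f g : ℝ → ℝ} {K : NNReal}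
    {s : Set ℝ} {a b : ℝ} (hg : LipschitzOnWith K g s)
    (hf : AbsolutelyContinuousOnInterval f a b) (hfs : MapsTo f (uIcc a b) s) :
    AbsolutelyContinuousOnInterval (fun x => g (f x)) a b := by
  refine squeeze_zero' (Eventually.of_forall fun E => Finset.sum_nonneg fun _ _ => dist_nonneg)
    ?_ (by simpa using Tendsto.const_mul (K : ℝ) hf)
  filter_upwards [mem_inf_of_right (mem_principal_self _)] with E hE
  rw [Finset.mul_sum]
  exact Finset.sum_le_sum fun i hi => hg.dist_le_mul _ (hfs (hE.1 i hi).1) _ (hfs (hE.1 i hi).2)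

theorem ContDiff.comp_absolutelyContinuousOnInterval {f g : ℝ → ℝ} {a b : ℝ}
    (hg : ContDiff ℝ 1 g) (hf : AbsolutelyContinuousOnInterval f a b) :
    AbsolutelyContinuousOnInterval (fun x => g (f x)) a b := by
  obtain ⟨K, hK⟩ := LocallyLipschitzOn.exists_lipschitzOnWith_of_compact
    (isCompact_uIcc.image_of_continuousOn hf.continuousOn) hg.locallyLipschitz.locallyLipschitzOn
  exact hK.comp_absolutelyContinuousOnInterval hf (mapsTo_image f _)

theorem integral_mul_primitive_rpow {u : ℝ → ℝ} {a b r : ℝ}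
    (hu : IntervalIntegrable u volume a b) (hr : 0 ≤ r) :
    ∫ x in a..b, u x * (∫ t in a..x, u t) ^ r = (∫ t in a..b, u t) ^ (r + 1) / (r + 1) := by
  set U : ℝ → ℝ := fun x => ∫ t in a..x, u t
  have hU : AbsolutelyContinuousOnInterval U a b :=
    hu.absolutelyContinuousOnInterval_intervalIntegral left_mem_uIcc
  have hderiv : ∀ᵐ x, x ∈ uIoc a b →
      deriv (fun x => U x ^ (r + 1)) x = (r + 1) * (u x * U x ^ r) := by
    filter_upwards [hu.ae_hasDerivAt_integral] with x hx hxab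
    have := (hx (uIoc_subset_uIcc hxab) a left_mem_uIcc).rpow_const (p := r + 1)
      (Or.inr (by linarith))
    rw [this.deriv, add_sub_cancel_right]
    ring
  have hFTC := ((Real.contDiff_rpow_const_of_le (n := 1) (p := r + 1)
    (by push_cast; linarith)).comp_absolutelyContinuousOnInterval hU).integral_deriv_eq_sub
  rw [intervalIntegral.integral_congr_ae hderiv, intervalIntegral.integral_const_mul] at hFTC
  simp only [U, intervalIntegral.integral_same, Real.zero_rpow (by linarith : r + 1 ≠ 0),
    sub_zero] at hFTC
  rw [← hFTC]
  field_simp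

theorem ConvexOn.add_rightDeriv_mul_sub_le {S : Set ℝ} {f : ℝ → ℝ} (hf : ConvexOn ℝ S f)
    {p x : ℝ} (hp : p ∈ interior S) (hx : x ∈ S) :
    f p + derivWithin f (Ioi p) p * (x - p) ≤ f x := by
  rcases lt_trichotomy x p with hxp | rfl | hpx
  · have h := (hf.slope_le_leftDeriv_of_mem_interior hx hp hxp).trans
      (hf.leftDeriv_le_rightDeriv_of_mem_interior hp)
    rw [slope_def_field, div_le_iff₀ (sub_pos.2 hxp)] at h
    linarith
  · simp
  · have h := hf.rightDeriv_le_slope_of_mem_interior hp hx hpx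
    rw [slope_def_field, le_div_iff₀ (sub_pos.2 hpx)] at h
    linarith

theorem ConcaveOn.exists_le_add_mul_sub {S : Set ℝ} {f : ℝ → ℝ} (hf : ConcaveOn ℝ S f)
    {p : ℝ} (hp : p ∈ interior S) : ∃ c : ℝ, ∀ x ∈ S, f x ≤ f p + c * (x - p) :=
  ⟨-derivWithin (-f) (Ioi p) p, fun x hx => by
    have := hf.neg.add_rightDeriv_mul_sub_le hp hx
    simp only [Pi.neg_apply] at this
    linarith⟩

section Integral

variable {α : Type*} [MeasurableSpace α] {μ : Measure α}

/-- Unlike `ConcaveOn.le_map_integral`, this needs no continuity of `φ`: a supporting line at the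
interior point `p` suffices. -/
theorem ConcaveOn.integral_mul_le_of_mem_interior {S : Set ℝ} {φ : ℝ → ℝ}
    (hφ : ConcaveOn ℝ S φ) {p : ℝ} (hp : p ∈ interior S)
    {w g : α → ℝ} (hg : ∀ᵐ x ∂μ, g x ∈ S) (hw : 0 ≤ᵐ[μ] w) (hw_int : Integrable w μ)
    (hwg : Integrable (fun x => w x * g x) μ) (hwφ : Integrable (fun x => w x * φ (g x)) μ)
    (hmean : ∫ x, w x * g x ∂μ = (∫ x, w x ∂μ) * p) :
    ∫ x, w x * φ (g x) ∂μ ≤ (∫ x, w x ∂μ) * φ p := by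
  obtain ⟨c, hc⟩ := hφ.exists_le_add_mul_sub hp
  have hsum : Integrable (fun x => φ p * w x + c * (w x * g x)) μ :=
    (hw_int.const_mul _).add (hwg.const_mul _)
  have hline : Integrable (fun x => φ p * w x + c * (w x * g x) - c * p * w x) μ :=
    hsum.sub (hw_int.const_mul _)
  calc ∫ x, w x * φ (g x) ∂μ
      ≤ ∫ x, (φ p * w x + c * (w x * g x) - c * p * w x) ∂μ := by
        refine integral_mono_ae hwφ hline ?_
        filter_upwards [hg, hw] with x hgx hwx
        nlinarith [mul_le_mul_of_nonneg_left (hc _ hgx) hwx]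
    _ = (∫ x, w x ∂μ) * φ p := by
        rw [integral_sub hsum (hw_int.const_mul _),
          integral_add (hw_int.const_mul _) (hwg.const_mul _), integral_const_mul,
          integral_const_mul, integral_const_mul, hmean]
        ring

theorem ConcaveOn.le_map_integral_of_mem_interior [IsProbabilityMeasure μ] {S : Set ℝ}
    {φ : ℝ → ℝ} (hφ : ConcaveOn ℝ S φ) {g : α → ℝ} (hg : ∀ᵐ x ∂μ, g x ∈ S)
    (hg_int : Integrable g μ) (hφg : Integrable (fun x => φ (g x)) μ)
    (hmean : ∫ x, g x ∂μ ∈ interior S) :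
    ∫ x, φ (g x) ∂μ ≤ φ (∫ x, g x ∂μ) := by
  simpa using hφ.integral_mul_le_of_mem_interior (w := fun _ => 1) hmean hg
    (ae_of_all _ fun _ => zero_le_one) (integrable_const _) (by simpa using hg_int)
    (by simpa using hφg) (by simp)

theorem integral_rpow_mul_rpow_le {f g : α → ℝ} (hf0 : 0 ≤ᵐ[μ] f) (hg0 : 0 ≤ᵐ[μ] g)
    (hf : Integrable f μ) (hg : Integrable g μ) {p q : ℝ} (hp : 0 ≤ p) (hq : 0 ≤ q)
    (hpq : p + q = 1) :
    ∫ x, f x ^ p * g x ^ q ∂μ ≤ (∫ x, f x ∂μ) ^ p * (∫ x, g x ∂μ) ^ q := by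
  have hIf := integral_nonneg_of_ae hf0
  have hIg := integral_nonneg_of_ae hg0
  have hRHS : 0 ≤ (∫ x, f x ∂μ) ^ p * (∫ x, g x ∂μ) ^ q := by positivity
  by_cases hint : Integrable (fun x => f x ^ p * g x ^ q) μ
  swap
  · rw [integral_undef hint]
    exact hRHS
  rw [← ENNReal.ofReal_le_ofReal_iff hRHS]
  calc ENNReal.ofReal (∫ x, f x ^ p * g x ^ q ∂μ)
      = ∫⁻ x, ENNReal.ofReal (f x ^ p * g x ^ q) ∂μ := by
        refine ofReal_integral_eq_lintegral_ofReal hint ?_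
        filter_upwards [hf0, hg0] with x hfx hgx
        exact mul_nonneg (Real.rpow_nonneg hfx p) (Real.rpow_nonneg hgx q)
    _ = ∫⁻ x, ENNReal.ofReal (f x) ^ p * ENNReal.ofReal (g x) ^ q ∂μ := by
        refine lintegral_congr_ae ?_
        filter_upwards [hf0, hg0] with x hfx hgx
        rw [ENNReal.ofReal_mul (Real.rpow_nonneg hfx p), ENNReal.ofReal_rpow_of_nonneg hfx hp,
          ENNReal.ofReal_rpow_of_nonneg hgx hq]
    _ ≤ (∫⁻ x, ENNReal.ofReal (f x) ∂μ) ^ p * (∫⁻ x, ENNReal.ofReal (g x) ∂μ) ^ q :=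
        ENNReal.lintegral_mul_norm_pow_le hf.aemeasurable.ennreal_ofReal
          hg.aemeasurable.ennreal_ofReal hp hq hpq
    _ = ENNReal.ofReal ((∫ x, f x ∂μ) ^ p * (∫ x, g x ∂μ) ^ q) := by
        rw [← ofReal_integral_eq_lintegral_ofReal hf hf0,
          ← ofReal_integral_eq_lintegral_ofReal hg hg0,
          ENNReal.ofReal_mul (Real.rpow_nonneg hIf p),
          ENNReal.ofReal_rpow_of_nonneg hIf hp, ENNReal.ofReal_rpow_of_nonneg hIg hq]

theorem integral_rpow_sub_two_mul_le {f b : α → ℝ} {q : ℝ} (hq : 2 ≤ q) (hf : 0 ≤ᵐ[μ] f)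
    (hb : 0 ≤ᵐ[μ] b) (hfb_int : Integrable (fun x => f x ^ q * b x) μ)
    (hb_int : Integrable b μ) :
    ∫ x, f x ^ (q - 2) * b x ∂μ ≤
      (∫ x, f x ^ q * b x ∂μ) ^ ((q - 2) / q) * (∫ x, b x ∂μ) ^ (2 / q) := by
  have hq0 : 0 < q := by linarith
  have hexp : (q - 2) / q + 2 / q = 1 := by field_simp; ring
  have hsplit : ∀ᵐ x ∂μ,
      f x ^ (q - 2) * b x = (f x ^ q * b x) ^ ((q - 2) / q) * b x ^ (2 / q) := by
    filter_upwards [hf, hb] with x hfx hbx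
    rw [Real.mul_rpow (Real.rpow_nonneg hfx q) hbx, ← Real.rpow_mul hfx, mul_assoc,
      ← Real.rpow_add' hbx (by rw [hexp]; exact one_ne_zero), hexp, Real.rpow_one,
      mul_div_cancel₀ _ hq0.ne']
  rw [integral_congr_ae hsplit]
  refine integral_rpow_mul_rpow_le ?_ hb hfb_int hb_int (by positivity) (by positivity) hexp
  filter_upwards [hf, hb] with x hfx hbx
  exact mul_nonneg (Real.rpow_nonneg hfx q) hbx

end Integral

section UnitInterval

variable {u : ℝ → ℝ}

theorem intervalIntegral_zero_one_eq_setIntegral_Ioo (f : ℝ → ℝ) :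
    ∫ x in (0:ℝ)..1, f x = ∫ x in Ioo 0 1, f x := by
  rw [intervalIntegral.integral_of_le zero_le_one, integral_Ioc_eq_integral_Ioo]

theorem primitive_nonneg (hu : ∀ x ∈ Ioo (0:ℝ) 1, 0 ≤ u x) {x : ℝ} (hx : x ∈ Ioo (0:ℝ) 1) :
    0 ≤ ∫ z in (0:ℝ)..x, u z := by
  rw [intervalIntegral.integral_of_le hx.1.le]
  exact setIntegral_nonneg measurableSet_Ioc fun y hy => hu y ⟨hy.1, hy.2.trans_lt hx.2⟩

theorem continuousOn_primitive_rpow (huint : IntegrableOn u (Ioo 0 1)) {q : ℝ} (hq : 0 ≤ q) :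
    ContinuousOn (fun x => (∫ z in (0:ℝ)..x, u z) ^ q) (Icc 0 1) := by
  have hui : IntervalIntegrable u volume 0 1 :=
    (intervalIntegrable_iff_integrableOn_Ioo_of_le zero_le_one).2 huint
  have hU := (hui.absolutelyContinuousOnInterval_intervalIntegral left_mem_uIcc).continuousOn
  rw [uIcc_of_le zero_le_one] at hU
  exact hU.rpow_const fun _ _ => Or.inr hq

theorem setIntegral_primitive_rpow_mul_eq (huint : IntegrableOn u (Ioo 0 1)) {q : ℝ}
    (hq : 0 ≤ q) :
    ∫ x in Ioo 0 1, (∫ z in (0:ℝ)..x, u z) ^ q * u x =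
      (∫ x in (0:ℝ)..1, u x) ^ (q + 1) / (q + 1) := by
  rw [← integral_mul_primitive_rpow
    ((intervalIntegrable_iff_integrableOn_Ioo_of_le zero_le_one).2 huint) hq,
    intervalIntegral_zero_one_eq_setIntegral_Ioo]
  simp only [mul_comm]

theorem setIntegral_primitive_rpow_sub_two_mul_le (hu : ∀ x ∈ Ioo (0:ℝ) 1, 0 ≤ u x)
    (huint : IntegrableOn u (Ioo 0 1)) {b : ℝ → ℝ} (hb : ∀ x ∈ Ioo (0:ℝ) 1, 0 ≤ b x)
    (hb_int : IntegrableOn b (Ioo 0 1)) {q : ℝ} (hq : 2 ≤ q) :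
    ∫ x in Ioo 0 1, (∫ z in (0:ℝ)..x, u z) ^ (q - 2) * b x ≤
      (∫ x in Ioo 0 1, (∫ z in (0:ℝ)..x, u z) ^ q * b x) ^ ((q - 2) / q) *
        (∫ x in Ioo 0 1, b x) ^ (2 / q) :=
  integral_rpow_sub_two_mul_le hq
    (ae_restrict_of_forall_mem measurableSet_Ioo fun _ hx => primitive_nonneg hu hx)
    (ae_restrict_of_forall_mem measurableSet_Ioo hb)
    (hb_int.continuousOn_mul_of_subset (continuousOn_primitive_rpow huint (by linarith))
      isCompact_Icc measurableSet_Ioo Ioo_subset_Icc_self) hb_int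

theorem ConcaveOn.setIntegral_Ioo_comp_le {B : ℝ → ℝ} (hB : ConcaveOn ℝ (Ici 0) B)
    (hu : ∀ x ∈ Ioo (0:ℝ) 1, 0 ≤ u x) (huint : IntegrableOn u (Ioo 0 1))
    (hBu : IntegrableOn (fun x => B (u x)) (Ioo 0 1)) (hmass : 0 < ∫ x in (0:ℝ)..1, u x) :
    ∫ x in Ioo 0 1, B (u x) ≤ B (∫ x in (0:ℝ)..1, u x) := by
  have : IsProbabilityMeasure (volume.restrict (Ioo (0:ℝ) 1)) := ⟨by simp⟩
  rw [intervalIntegral_zero_one_eq_setIntegral_Ioo] at hmass ⊢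
  exact hB.le_map_integral_of_mem_interior (ae_restrict_of_forall_mem measurableSet_Ioo hu)
    huint hBu (by rwa [interior_Ici])

theorem ConcaveOn.setIntegral_primitive_rpow_mul_le {B : ℝ → ℝ} (hB : ConcaveOn ℝ (Ici 0) B)
    (hu : ∀ x ∈ Ioo (0:ℝ) 1, 0 ≤ u x) (huint : IntegrableOn u (Ioo 0 1))
    (hBu : IntegrableOn (fun x => B (u x)) (Ioo 0 1)) (hmass : 0 < ∫ x in (0:ℝ)..1, u x)
    {q : ℝ} (hq : 0 ≤ q) :
    ∫ x in Ioo 0 1, (∫ z in (0:ℝ)..x, u z) ^ q * B (u x) ≤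
      (∫ x in Ioo 0 1, (∫ z in (0:ℝ)..x, u z) ^ q) *
        B ((∫ x in (0:ℝ)..1, u x) ^ (q + 1) /
          ((q + 1) * ∫ x in Ioo 0 1, (∫ z in (0:ℝ)..x, u z) ^ q)) := by
  have hUq := continuousOn_primitive_rpow huint hq
  have hUq0 : ∀ᵐ x ∂volume.restrict (Ioo (0:ℝ) 1), 0 ≤ (∫ z in (0:ℝ)..x, u z) ^ q :=
    ae_restrict_of_forall_mem measurableSet_Ioo fun x hx =>
      Real.rpow_nonneg (primitive_nonneg hu hx) q
  have hUq_int : IntegrableOn (fun x => (∫ z in (0:ℝ)..x, u z) ^ q) (Ioo 0 1) :=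
    (hUq.integrableOn_compact isCompact_Icc).mono_set Ioo_subset_Icc_self
  have hmoment := setIntegral_primitive_rpow_mul_eq huint hq
  have hmoment_pos : 0 < (∫ x in (0:ℝ)..1, u x) ^ (q + 1) / (q + 1) := by positivity
  -- `∫ U^q = 0` would force `U^q u = 0` a.e.
  have hUq_pos : 0 < ∫ x in Ioo 0 1, (∫ z in (0:ℝ)..x, u z) ^ q := by
    refine (integral_nonneg_of_ae hUq0).lt_of_ne fun h => hmoment_pos.ne ?_
    have hzero := (integral_eq_zero_iff_of_nonneg_ae hUq0 hUq_int).1 h.symm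
    rw [← hmoment]
    refine (integral_eq_zero_of_ae ?_).symm
    filter_upwards [hzero] with x hx
    simp only [Pi.zero_apply] at hx
    simp [hx]
  refine hB.integral_mul_le_of_mem_interior ?_ (ae_restrict_of_forall_mem measurableSet_Ioo hu)
    hUq0 hUq_int
    (huint.continuousOn_mul_of_subset hUq isCompact_Icc measurableSet_Ioo Ioo_subset_Icc_self)
    (hBu.continuousOn_mul_of_subset hUq isCompact_Icc measurableSet_Ioo Ioo_subset_Icc_self) ?_
  · rw [interior_Ici, mem_Ioi, ← div_div]
    exact div_pos hmoment_pos hUq_pos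
  · rw [hmoment]
    field_simp

end UnitInterval

/-- Jensen-type estimate: if `B : [0,∞) → [0,∞)` is concave, `u ≥ 0` is integrable on
`(0,1)` with `∫₀¹ u = M > 0`, `U(x) = ∫₀^x u` and `L = (1/q)∫₀¹ U^q` with `q > 2`, then
`∫₀¹ U^{q−2} B(u) ≤ (qL)^{(q−2)/q} B(M)^{2/q} B(M^{q+1}/((q+1)qL))^{(q−2)/q}`. -/
theorem jensen_moment_estimate (B u : ℝ → ℝ) (M q L : ℝ)
    (hq : 2 < q) (hM : 0 < M)
    (hBconc : ConcaveOn ℝ (Ici 0) B)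
    (hBpos : ∀ x : ℝ, 0 ≤ x → 0 ≤ B x)
    (hu : ∀ x ∈ Ioo (0:ℝ) 1, 0 ≤ u x)
    (huint : IntegrableOn u (Ioo 0 1))
    (hmass : (∫ x in (0:ℝ)..1, u x) = M)
    (hBu : IntegrableOn (fun x => B (u x)) (Ioo 0 1))
    (hL : L = (1 / q) * ∫ x in (0:ℝ)..1, (∫ z in (0:ℝ)..x, u z) ^ q) :
    (∫ x in (0:ℝ)..1, (∫ z in (0:ℝ)..x, u z) ^ (q - 2) * B (u x)) ≤
      (q * L) ^ ((q - 2) / q) * (B M) ^ (2 / q) *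
        (B (M ^ (q + 1) / ((q + 1) * q * L))) ^ ((q - 2) / q) := by
  have hBu0 : ∀ x ∈ Ioo (0:ℝ) 1, 0 ≤ B (u x) := fun x hx => hBpos _ (hu x hx)
  have hqL : q * L = ∫ x in Ioo 0 1, (∫ z in (0:ℝ)..x, u z) ^ q := by
    rw [hL, ← intervalIntegral_zero_one_eq_setIntegral_Ioo]
    field_simp
  have hqL_nonneg : 0 ≤ q * L := hqL ▸ setIntegral_nonneg measurableSet_Ioo fun x hx =>
    Real.rpow_nonneg (primitive_nonneg hu hx) q
  have hJensen₁ := hBconc.setIntegral_Ioo_comp_le hu huint hBu (hmass ▸ hM)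
  have hJensen₂ := hBconc.setIntegral_primitive_rpow_mul_le hu huint hBu (hmass ▸ hM)
    (q := q) (by linarith)
  rw [hmass] at hJensen₁
  rw [hmass, ← hqL] at hJensen₂
  have hBm : 0 ≤ B (M ^ (q + 1) / ((q + 1) * (q * L))) :=
    hBpos _ (div_nonneg (by positivity) (mul_nonneg (by linarith) hqL_nonneg))
  rw [intervalIntegral_zero_one_eq_setIntegral_Ioo, mul_assoc (q + 1)]
  calc _ ≤ (∫ x in Ioo 0 1, (∫ z in (0:ℝ)..x, u z) ^ q * B (u x)) ^ ((q - 2) / q) *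
          (∫ x in Ioo 0 1, B (u x)) ^ (2 / q) :=
        setIntegral_primitive_rpow_sub_two_mul_le hu huint hBu0 hBu hq.le
    _ ≤ (q * L * B (M ^ (q + 1) / ((q + 1) * (q * L)))) ^ ((q - 2) / q) * (B M) ^ (2 / q) := by
        have : 0 ≤ ∫ x in Ioo 0 1, B (u x) := setIntegral_nonneg measurableSet_Ioo hBu0
        have : 0 ≤ ∫ x in Ioo 0 1, (∫ z in (0:ℝ)..x, u z) ^ q * B (u x) :=
          setIntegral_nonneg measurableSet_Ioo fun x hx =>
            mul_nonneg (Real.rpow_nonneg (primitive_nonneg hu hx) q) (hBu0 x hx)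
        gcongr
    _ = _ := by
        rw [Real.mul_rpow hqL_nonneg hBm]
        ring
end
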